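/- arXiv:1009.2703 — 4 statements merged into one kernel-verified Lean document; each statement's English description precedes it below -/
import Mathlib

section
/- Let Y, R be smooth vector fields on a smooth manifold M, let ω¹,…,ωᵏ be 2-forms and η¹,…,ηᵏ be 1-forms on M such that at every point (∩_B ker ωᴮ) ∩ (∩_B ker ηᴮ) = {0} (kernels taken pointwise). If for each B: L_Y ωᴮ = 0, L_Y ηᴮ = 0, i(R)ωᴮ = 0, and i(R)ηᴮ is a constant function, then i([Y,R])ωᴮ = 0 and i([Y,R])ηᴮ = 0 for every B, and hence [Y, R] = 0. -/
/-- Lie derivative of a 1-form along a vector field, in coordinates on a vector space. -/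
noncomputable def lieDeriv1 {E : Type*} [NormedAddCommGroup E] [NormedSpace ℝ E]
    (Y : E → E) (η : E → E →L[ℝ] ℝ) (x v : E) : ℝ :=
  fderiv ℝ (fun y => η y v) x (Y x) + η x (fderiv ℝ Y x v)

/-- Lie derivative of a 2-form along a vector field, in coordinates on a vector space. -/
noncomputable def lieDeriv2 {E : Type*} [NormedAddCommGroup E] [NormedSpace ℝ E]
    (Y : E → E) (ω : E → E →L[ℝ] E →L[ℝ] ℝ) (x u v : E) : ℝ :=
  fderiv ℝ (fun y => ω y u v) x (Y x) + ω x (fderiv ℝ Y x u) v + ω x u (fderiv ℝ Y x v)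

/-- Lie bracket of vector fields on a vector space. -/
noncomputable def vbracket {E : Type*} [NormedAddCommGroup E] [NormedSpace ℝ E]
    (Y R : E → E) (x : E) : E :=
  fderiv ℝ R x (Y x) - fderiv ℝ Y x (R x)

lemma fderiv_apply1 {E : Type*} [NormedAddCommGroup E] [NormedSpace ℝ E]
    {η : E → E →L[ℝ] ℝ} (hη : ContDiff ℝ (⊤ : ℕ∞) η) (a x h : E) :
    fderiv ℝ (fun y => η y a) x h = fderiv ℝ η x h a := by
  have h1 : HasFDerivAt η (fderiv ℝ η x) x :=
    (hη.differentiable (by simp) x).hasFDerivAt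
  have h2 := h1.clm_apply (hasFDerivAt_const a x)
  rw [h2.fderiv]
  simp

lemma fderiv_apply2 {E : Type*} [NormedAddCommGroup E] [NormedSpace ℝ E]
    {ω : E → E →L[ℝ] E →L[ℝ] ℝ} (hω : ContDiff ℝ (⊤ : ℕ∞) ω) (a b x h : E) :
    fderiv ℝ (fun y => ω y a b) x h = fderiv ℝ ω x h a b := by
  have h1 : HasFDerivAt ω (fderiv ℝ ω x) x :=
    (hω.differentiable (by simp) x).hasFDerivAt
  have h2 := (h1.clm_apply (hasFDerivAt_const a x)).clm_apply (hasFDerivAt_const b x)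
  rw [h2.fderiv]
  simp

/-- Lemma 3.9: a vector field preserving the forms of a k-cosymplectic structure
commutes with the Reeb vector field. -/
theorem noether_symmetry_commutes_with_reeb (k : ℕ) {E : Type*}
    [NormedAddCommGroup E] [NormedSpace ℝ E]
    (Y R : E → E) (hY : ContDiff ℝ (⊤ : ℕ∞) Y) (hR : ContDiff ℝ (⊤ : ℕ∞) R)
    (ω : Fin k → E → E →L[ℝ] E →L[ℝ] ℝ) (η : Fin k → E → E →L[ℝ] ℝ)
    (hωs : ∀ B, ContDiff ℝ (⊤ : ℕ∞) (ω B)) (hηs : ∀ B, ContDiff ℝ (⊤ : ℕ∞) (η B))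
    (halt : ∀ B x (u v : E), ω B x u v = - ω B x v u)
    (hnd : ∀ (x v : E), (∀ B (u : E), ω B x v u = 0) → (∀ B, η B x v = 0) → v = 0)
    (hLω : ∀ B x (u v : E), lieDeriv2 Y (ω B) x u v = 0)
    (hLη : ∀ B x (v : E), lieDeriv1 Y (η B) x v = 0)
    (hiRω : ∀ B x (u : E), ω B x (R x) u = 0)
    (hiRη : ∀ B, ∃ cB : ℝ, ∀ x, η B x (R x) = cB) :
    (∀ B x (u : E), ω B x (vbracket Y R x) u = 0) ∧
    (∀ B x, η B x (vbracket Y R x) = 0) ∧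
    (∀ x, vbracket Y R x = 0) := by
  have hRd : ∀ x, HasFDerivAt R (fderiv ℝ R x) x :=
    fun x => (hR.differentiable (by simp) x).hasFDerivAt
  have hω1 : ∀ B x (u : E), ω B x (vbracket Y R x) u = 0 := by
    intro B x u
    have hωd : HasFDerivAt (ω B) (fderiv ℝ (ω B) x) x :=
      ((hωs B).differentiable (by simp) x).hasFDerivAt
    -- derivative of y ↦ ω B y (R y) u
    have h0 := (hωd.clm_apply (hRd x)).clm_apply (hasFDerivAt_const u x)
    have hz : (fun y => ω B y (R y) u) = fun _ : E => (0 : ℝ) := by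
      funext y; exact hiRω B y u
    rw [hz] at h0
    have hD := h0.unique (hasFDerivAt_const (0 : ℝ) x)
    have eq1 : ω B x (fderiv ℝ R x (Y x)) u + fderiv ℝ (ω B) x (Y x) (R x) u = 0 := by
      have := congrFun (congrArg DFunLike.coe hD) (Y x)
      simpa using this
    have eq2 : fderiv ℝ (ω B) x (Y x) (R x) u = - ω B x (fderiv ℝ Y x (R x)) u := by
      have hL := hLω B x (R x) u
      unfold lieDeriv2 at hL
      rw [fderiv_apply2 (hωs B), hiRω B x (fderiv ℝ Y x u)] at hL
      linarith
    rw [vbracket, map_sub, ContinuousLinearMap.sub_apply]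
    rw [eq2] at eq1
    linarith
  have hη1 : ∀ B x, η B x (vbracket Y R x) = 0 := by
    intro B x
    have hηd : HasFDerivAt (η B) (fderiv ℝ (η B) x) x :=
      ((hηs B).differentiable (by simp) x).hasFDerivAt
    obtain ⟨cB, hcB⟩ := hiRη B
    have h0 := hηd.clm_apply (hRd x)
    have hz : (fun y => η B y (R y)) = fun _ : E => cB := by
      funext y; exact hcB y
    rw [hz] at h0
    have hD := h0.unique (hasFDerivAt_const cB x)
    have eq1 : η B x (fderiv ℝ R x (Y x)) + fderiv ℝ (η B) x (Y x) (R x) = 0 := by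
      have := congrFun (congrArg DFunLike.coe hD) (Y x)
      simpa using this
    have eq2 : fderiv ℝ (η B) x (Y x) (R x) = - η B x (fderiv ℝ Y x (R x)) := by
      have hL := hLη B x (R x)
      unfold lieDeriv1 at hL
      rw [fderiv_apply1 (hηs B)] at hL
      linarith
    rw [vbracket, map_sub]
    rw [eq2] at eq1
    linarith
  exact ⟨hω1, hη1, fun x => hnd x _ (fun B u => hω1 B x u) (fun B => hη1 B x)⟩
end

section
/- Let M be a smooth manifold carrying 2-forms ω¹,…,ωᵏ, 1-forms η¹,…,ηᵏ, vector fields R₁,…,R_k with i(R_A)ηᴮ = δᴬᴮ and i(R_A)ωᴮ = 0, and a smooth function H. Let Y be a vector field with L_Y ωᴬ = 0, i(Y)ηᴬ = 0, and Y(H) = 0 for all A, and suppose Fᴬ are smooth functions on an open set U with i(Y)ωᴬ = dFᴬ. Then for every k-tuple of vector fields (X₁,…,X_k) satisfying ηᴬ(X_B) = δᴬᴮ and Σ_A i(X_A)ωᴬ = dH − Σ_A (R_A H) ηᴬ, one has Σ_{A=1}^k X_A(Fᴬ) = 0 on U. -/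
/-- Noether's theorem (Theorem 3.11): the functions Fᴬ with dFᴬ = i(Y)ωᴬ, associated
to an infinitesimal k-cosymplectic Noether symmetry Y, satisfy Σ_A X_A(Fᴬ) = 0 for every
k-vector field X solving the geometric Hamilton equations. -/
theorem noether_theorem (k : ℕ) {E : Type*} [NormedAddCommGroup E] [NormedSpace ℝ E]
    (ω : Fin k → E → E →L[ℝ] E →L[ℝ] ℝ) (η : Fin k → E → E →L[ℝ] ℝ)
    (halt : ∀ A x (u v : E), ω A x u v = - ω A x v u)
    (R : Fin k → E → E)
    (hRη : ∀ A B x, η B x (R A x) = if A = B then (1 : ℝ) else 0)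
    (hRω : ∀ A B x (u : E), ω B x (R A x) u = 0)
    (H : E → ℝ) (hH : ContDiff ℝ (⊤ : ℕ∞) H)
    (Y : E → E) (hY : ContDiff ℝ (⊤ : ℕ∞) Y)
    (hLω : ∀ A x (u v : E), lieDeriv2 Y (ω A) x u v = 0)
    (hYη : ∀ A x, η A x (Y x) = 0)
    (hYH : ∀ x, fderiv ℝ H x (Y x) = 0)
    (U : Set E) (F : Fin k → E → ℝ)
    (hF : ∀ A, ∀ x ∈ U, ∀ v, fderiv ℝ (F A) x v = ω A x (Y x) v)
    (X : Fin k → E → E)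
    (hXη : ∀ A B x, η A x (X B x) = if A = B then (1 : ℝ) else 0)
    (hXω : ∀ x (v : E), ∑ A, ω A x (X A x) v
      = fderiv ℝ H x v - ∑ A, (fderiv ℝ H x (R A x)) * η A x v) :
    ∀ x ∈ U, ∑ A, fderiv ℝ (F A) x (X A x) = 0 := by
  intro x hx
  have h : ∑ A, fderiv ℝ (F A) x (X A x) = -∑ A, ω A x (X A x) (Y x) := by
    rw [← Finset.sum_neg_distrib]
    exact Finset.sum_congr rfl fun A _ => by rw [hF A x hx, halt]
  rw [h, hXω x (Y x), hYH]
  simp [hYη]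
end

section
/- Let V be a real vector space of dimension k + n + kn with Darboux basis, ηᴬ = dtᴬ and ωᴬ = Σᵢ dqⁱ ∧ dpᴬᵢ. Consider the linear map sending a k-tuple (X₁,…,X_k) ∈ V^k to (Σ_A i(X_A)ωᴬ, (ηᴬ(X_B))_{A,B}) ∈ V* × M_k(ℝ). Then the solution set of the affine equations ηᴬ(X_B) = δᴬᴮ and Σ_A i(X_A)ωᴬ = α, for any covector α ∈ V* satisfying α(∂/∂tᴬ) = 0 for all A, is a nonempty affine subspace of V^k of dimension (k−1)(kn+n). -/
/-- The model vector space of a k-cosymplectic Darboux chart. -/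
abbrev Vkn (k n : ℕ) := (Fin k → ℝ) × (Fin n → ℝ) × (Fin k → Fin n → ℝ)

/-- Darboux 1-forms ηᴬ = dtᴬ. -/
def etaD (k n : ℕ) (A : Fin k) (v : Vkn k n) : ℝ := v.1 A

/-- Darboux 2-forms ωᴬ = Σᵢ dqⁱ ∧ dpᴬᵢ. -/
def omegaD (k n : ℕ) (A : Fin k) (v w : Vkn k n) : ℝ :=
  ∑ i, (v.2.1 i * w.2.2 A i - w.2.1 i * v.2.2 A i)

section Aux

lemma etaD_sub' (k n : ℕ) (A : Fin k) (v w : Vkn k n) :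
    etaD k n A (v - w) = etaD k n A v - etaD k n A w := rfl

lemma etaD_add' (k n : ℕ) (A : Fin k) (v w : Vkn k n) :
    etaD k n A (v + w) = etaD k n A v + etaD k n A w := rfl

lemma etaD_smul' (k n : ℕ) (A : Fin k) (c : ℝ) (v : Vkn k n) :
    etaD k n A (c • v) = c * etaD k n A v := rfl

lemma omegaD_sub' (k n : ℕ) (A : Fin k) (v w u : Vkn k n) :
    omegaD k n A (v - w) u = omegaD k n A v u - omegaD k n A w u := by
  simp only [omegaD, ← Finset.sum_sub_distrib]
  refine Finset.sum_congr rfl fun i _ => ?_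
  show (v.2.1 i - w.2.1 i) * u.2.2 A i - u.2.1 i * (v.2.2 A i - w.2.2 A i) = _
  ring

lemma omegaD_add' (k n : ℕ) (A : Fin k) (v w u : Vkn k n) :
    omegaD k n A (v + w) u = omegaD k n A v u + omegaD k n A w u := by
  simp only [omegaD, ← Finset.sum_add_distrib]
  refine Finset.sum_congr rfl fun i _ => ?_
  show (v.2.1 i + w.2.1 i) * u.2.2 A i - u.2.1 i * (v.2.2 A i + w.2.2 A i) = _
  ring

lemma omegaD_smul' (k n : ℕ) (A : Fin k) (c : ℝ) (v u : Vkn k n) :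
    omegaD k n A (c • v) u = c * omegaD k n A v u := by
  simp only [omegaD, Finset.mul_sum]
  refine Finset.sum_congr rfl fun i _ => ?_
  show (c * v.2.1 i) * u.2.2 A i - u.2.1 i * (c * v.2.2 A i) = _
  ring

lemma decomp_t (k n : ℕ) (x : Fin k → ℝ) :
    (∑ A, x A • ((Pi.single A 1 : Fin k → ℝ), (0 : Fin n → ℝ), (0 : Fin k → Fin n → ℝ)))
      = ((x, 0, 0) : Vkn k n) := by
  ext <;> simp [Prod.fst_sum, Prod.snd_sum, Finset.sum_apply, Pi.single_apply,
    Finset.sum_ite_eq, mul_comm, ite_apply]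

lemma decomp_q (k n : ℕ) (y : Fin n → ℝ) :
    (∑ i, y i • ((0 : Fin k → ℝ), (Pi.single i 1 : Fin n → ℝ), (0 : Fin k → Fin n → ℝ)))
      = ((0, y, 0) : Vkn k n) := by
  ext <;> simp [Prod.fst_sum, Prod.snd_sum, Finset.sum_apply, Pi.single_apply,
    Finset.sum_ite_eq, mul_comm, ite_apply]

lemma decomp_p (k n : ℕ) (p : Fin k → Fin n → ℝ) :
    (∑ B, ∑ i, p B i • ((0 : Fin k → ℝ), (0 : Fin n → ℝ),
        (Pi.single B (Pi.single i 1) : Fin k → Fin n → ℝ)))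
      = ((0, 0, p) : Vkn k n) := by
  ext <;> simp [Prod.fst_sum, Prod.snd_sum, Finset.sum_apply, Pi.single_apply,
    Finset.sum_ite_eq, mul_comm, ite_apply]

lemma alpha_eq (k n : ℕ) (α : Vkn k n →ₗ[ℝ] ℝ)
    (hα : ∀ A : Fin k, α (Pi.single A 1, 0, 0) = 0) (v : Vkn k n) :
    α v = (∑ i, v.2.1 i * α (0, Pi.single i 1, 0))
        + ∑ B, ∑ i, v.2.2 B i * α (0, 0, Pi.single B (Pi.single i 1)) := by
  have h1 : α ((v.1, 0, 0) : Vkn k n) = 0 := by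
    rw [← decomp_t, map_sum]
    simp only [map_smul, smul_eq_mul]
    exact Finset.sum_eq_zero fun A _ => by rw [hα, mul_zero]
  have h2 : α ((0, v.2.1, 0) : Vkn k n) = ∑ i, v.2.1 i * α (0, Pi.single i 1, 0) := by
    rw [← decomp_q, map_sum]
    simp only [map_smul, smul_eq_mul]
  have h3 : α ((0, 0, v.2.2) : Vkn k n)
      = ∑ B, ∑ i, v.2.2 B i * α (0, 0, Pi.single B (Pi.single i 1)) := by
    rw [← decomp_p, map_sum]
    refine Finset.sum_congr rfl fun B _ => ?_
    rw [map_sum]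
    simp only [map_smul, smul_eq_mul]
  have hv : v = ((v.1, 0, 0) : Vkn k n) + (0, v.2.1, 0) + (0, 0, v.2.2) := by
    ext <;> simp
  conv_lhs => rw [hv]
  rw [map_add, map_add, h1, h2, h3, zero_add]

/-- The trace-type linear map on the p-components. -/
def Lmap (k n : ℕ) : (Fin k → Fin k → Fin n → ℝ) →ₗ[ℝ] (Fin n → ℝ) where
  toFun p := fun i => ∑ A, p A A i
  map_add' p q := by funext i; simp [Finset.sum_add_distrib]
  map_smul' c p := by funext i; simp [Finset.mul_sum]

lemma finrank_ker_Lmap (k n : ℕ) (hk : 0 < k) :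
    Module.finrank ℝ (LinearMap.ker (Lmap k n)) = (k - 1) * (k * n + n) := by
  have hsurj : Function.Surjective (Lmap k n) := by
    intro c
    refine ⟨fun A B i => if A = ⟨0, hk⟩ ∧ B = ⟨0, hk⟩ then c i else 0, ?_⟩
    funext i
    simp [Lmap, Finset.sum_ite_eq, and_self]
  have hr := (Lmap k n).finrank_range_add_finrank_ker
  rw [LinearMap.range_eq_top.mpr hsurj, finrank_top] at hr
  have hdom : Module.finrank ℝ (Fin k → Fin k → Fin n → ℝ) = k * (k * n) := by
    simp [Module.finrank_pi_fintype, Module.finrank_pi, Finset.sum_const]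
  have hcod : Module.finrank ℝ (Fin n → ℝ) = n := by simp [Module.finrank_pi]
  rw [hdom, hcod] at hr
  obtain ⟨m, rfl⟩ : ∃ m, k = m + 1 := ⟨k - 1, (Nat.succ_pred_eq_of_pos hk).symm⟩
  have key : (m + 1 - 1) * ((m + 1) * n + n) + n = (m + 1) * ((m + 1) * n) := by
    simp only [Nat.add_sub_cancel]
    ring
  have h2 : Module.finrank ℝ (LinearMap.ker (Lmap (m + 1) n)) + n
      = (m + 1 - 1) * ((m + 1) * n + n) + n := by
    rw [key]; rw [add_comm] at hr; exact hr
  exact Nat.add_right_cancel h2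

/-- The model space of the solution set: ker ω# ∩ ker η#. -/
def Wmod (k n : ℕ) : Submodule ℝ (Fin k → Vkn k n) where
  carrier := {Z : Fin k → Vkn k n |
    (∀ A B, etaD k n A (Z B) = 0) ∧ (∀ v, ∑ A, omegaD k n A (Z A) v = 0)}
  add_mem' := by
    rintro Z₁ Z₂ ⟨h1e, h1o⟩ ⟨h2e, h2o⟩
    refine ⟨fun A B => ?_, fun v => ?_⟩
    · show etaD k n A (Z₁ B + Z₂ B) = 0
      rw [etaD_add', h1e, h2e, add_zero]
    · have : ∀ A : Fin k, omegaD k n A ((Z₁ + Z₂) A) v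
          = omegaD k n A (Z₁ A) v + omegaD k n A (Z₂ A) v := fun A => omegaD_add' k n A _ _ v
      rw [Finset.sum_congr rfl fun A _ => this A, Finset.sum_add_distrib, h1o, h2o, add_zero]
  zero_mem' := by
    refine ⟨fun A B => rfl, fun v => ?_⟩
    simp [omegaD]
  smul_mem' := by
    rintro c Z ⟨he, ho⟩
    refine ⟨fun A B => ?_, fun v => ?_⟩
    · show etaD k n A (c • Z B) = 0
      rw [etaD_smul', he, mul_zero]
    · have : ∀ A : Fin k, omegaD k n A ((c • Z) A) v
          = c * omegaD k n A (Z A) v := fun A => omegaD_smul' k n A c _ v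
      rw [Finset.sum_congr rfl fun A _ => this A, ← Finset.mul_sum, ho, mul_zero]

lemma mem_Wmod_iff (k n : ℕ) (Z : Fin k → Vkn k n) :
    Z ∈ Wmod k n ↔ (∀ B, (Z B).1 = 0) ∧ (∀ B, (Z B).2.1 = 0) ∧
      (fun B => (Z B).2.2) ∈ LinearMap.ker (Lmap k n) := by
  constructor
  · rintro ⟨he, ho⟩
    refine ⟨fun B => funext fun A => he A B, fun B => funext fun j => ?_, ?_⟩
    · have h := ho ((0 : Fin k → ℝ), (0 : Fin n → ℝ),
        (Pi.single B (Pi.single j 1) : Fin k → Fin n → ℝ))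
      simp only [omegaD, Pi.single_apply, ite_apply, Pi.zero_apply, Pi.one_apply,
        mul_ite, mul_one, mul_zero, zero_mul, sub_zero] at h
      show (Z B).2.1 j = 0
      rw [← h]
      simp [Finset.sum_ite_eq, Finset.sum_ite_eq']
    · have h := ho ((0 : Fin k → ℝ), (0 : Fin n → ℝ), (0 : Fin k → Fin n → ℝ))
      rw [LinearMap.mem_ker]
      funext j
      have h2 := ho ((0 : Fin k → ℝ), (Pi.single j 1 : Fin n → ℝ),
        (0 : Fin k → Fin n → ℝ))
      simp only [omegaD, Pi.single_apply, Pi.zero_apply, mul_zero, zero_sub,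
        ite_mul, one_mul, zero_mul] at h2
      have h3 : ∑ A, ∑ i, -(if i = j then (Z A).2.2 A i else 0) = 0 := h2
      simp only [Finset.sum_neg_distrib, Finset.sum_ite_eq', Finset.mem_univ,
        if_true, neg_eq_zero] at h3
      exact h3
  · rintro ⟨ht, hq, hp⟩
    rw [LinearMap.mem_ker] at hp
    refine ⟨fun A B => congrFun (ht B) A, fun v => ?_⟩
    have : ∀ A : Fin k, omegaD k n A (Z A) v = ∑ i, -(v.2.1 i * (Z A).2.2 A i) := by
      intro A
      refine Finset.sum_congr rfl fun i _ => ?_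
      rw [congrFun (hq A) i, Pi.zero_apply, zero_mul, zero_sub]
    rw [Finset.sum_congr rfl fun A _ => this A, Finset.sum_comm]
    refine Finset.sum_eq_zero fun i _ => ?_
    rw [Finset.sum_neg_distrib, ← Finset.mul_sum]
    have : ∑ A, (Z A).2.2 A i = 0 := congrFun hp i
    rw [this, mul_zero, neg_zero]

/-- Pointwise content of Proposition 2.13: the solution set of ηᴬ(X_B) = δᴬᴮ,
Σ_A i(X_A)ωᴬ = α (with α annihilating the Reeb directions) is a nonempty affine
subspace of dimension (k−1)(kn+n), modelled on ker ω# ∩ ker η#. -/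
theorem hamilton_solutions_affine (k n : ℕ) (hk : 0 < k) (hn : 0 < n)
    (α : Vkn k n →ₗ[ℝ] ℝ)
    (hα : ∀ A : Fin k, α (Pi.single A 1, 0, 0) = 0) :
    ∃ X₀ ∈ {X : Fin k → Vkn k n |
        (∀ A B, etaD k n A (X B) = if A = B then (1 : ℝ) else 0) ∧
        (∀ v, ∑ A, omegaD k n A (X A) v = α v)},
      ∃ W : Submodule ℝ (Fin k → Vkn k n),
        ((W : Set (Fin k → Vkn k n)) = {Z : Fin k → Vkn k n |
          (∀ A B, etaD k n A (Z B) = 0) ∧ (∀ v, ∑ A, omegaD k n A (Z A) v = 0)}) ∧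
        Module.finrank ℝ W = (k - 1) * (k * n + n) ∧
        {X : Fin k → Vkn k n |
          (∀ A B, etaD k n A (X B) = if A = B then (1 : ℝ) else 0) ∧
          (∀ v, ∑ A, omegaD k n A (X A) v = α v)} = {X | X - X₀ ∈ W} := by
  have hk' : (k : ℝ) ≠ 0 := Nat.cast_ne_zero.mpr hk.ne'
  set a : Fin n → ℝ := fun i => α (0, Pi.single i 1, 0) with ha
  set b : Fin k → Fin n → ℝ := fun B i => α (0, 0, Pi.single B (Pi.single i 1)) with hb
  set X₀ : Fin k → Vkn k n := fun B =>
    ((Pi.single B 1 : Fin k → ℝ), b B,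
      fun A i => if A = B then -((k : ℝ)⁻¹ * a i) else 0) with hX₀
  have hη0 : ∀ A B, etaD k n A (X₀ B) = if A = B then (1 : ℝ) else 0 := by
    intro A B
    simp [etaD, hX₀, Pi.single_apply]
  have hω0 : ∀ v : Vkn k n, ∑ A, omegaD k n A (X₀ A) v = α v := by
    intro v
    rw [alpha_eq k n α hα v]
    have hA : ∀ A : Fin k, omegaD k n A (X₀ A) v
        = (∑ i, v.2.1 i * ((k : ℝ)⁻¹ * a i)) + ∑ i, v.2.2 A i * b A i := by
      intro A
      simp only [omegaD, hX₀, ← Finset.sum_add_distrib]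
      refine Finset.sum_congr rfl fun i _ => ?_
      simp only [if_true]
      ring
    rw [Finset.sum_congr rfl fun A _ => hA A, Finset.sum_add_distrib]
    congr 1
    rw [Finset.sum_const, Finset.card_univ, Fintype.card_fin, nsmul_eq_mul,
      Finset.mul_sum]
    refine Finset.sum_congr rfl fun i _ => ?_
    field_simp
    try ring
  refine ⟨X₀, ⟨hη0, hω0⟩, Wmod k n, rfl, ?_, ?_⟩
  · -- dimension
    have e : Wmod k n ≃ₗ[ℝ] LinearMap.ker (Lmap k n) :=
      { toFun := fun Z => ⟨fun B => (Z.1 B).2.2,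
          ((mem_Wmod_iff k n Z.1).mp Z.2).2.2⟩
        invFun := fun p => ⟨fun B => ((0 : Fin k → ℝ), (0 : Fin n → ℝ), p.1 B),
          (mem_Wmod_iff k n _).mpr ⟨fun B => rfl, fun B => rfl, p.2⟩⟩
        map_add' := fun Z₁ Z₂ => rfl
        map_smul' := fun c Z => rfl
        left_inv := by
          rintro ⟨Z, hZ⟩
          obtain ⟨ht, hq, -⟩ := (mem_Wmod_iff k n Z).mp hZ
          refine Subtype.ext (funext fun B => ?_)
          show ((0 : Fin k → ℝ), (0 : Fin n → ℝ), (Z B).2.2) = Z B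
          rw [show (0 : Fin k → ℝ) = (Z B).1 from (ht B).symm,
            show (0 : Fin n → ℝ) = (Z B).2.1 from (hq B).symm]
        right_inv := fun p => rfl }
    rw [e.finrank_eq]
    exact finrank_ker_Lmap k n hk
  · -- affine translate
    ext X
    simp only [Set.mem_setOf_eq]
    have hmem : X - X₀ ∈ Wmod k n ↔
        (∀ A B, etaD k n A ((X - X₀) B) = 0) ∧
        (∀ v, ∑ A, omegaD k n A ((X - X₀) A) v = 0) := Iff.rfl
    rw [hmem]
    constructor
    · rintro ⟨hη, hω⟩
      refine ⟨fun A B => ?_, fun v => ?_⟩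
      · show etaD k n A (X B - X₀ B) = 0
        rw [etaD_sub', hη A B, hη0 A B, sub_self]
      · have : ∀ A : Fin k, omegaD k n A ((X - X₀) A) v
            = omegaD k n A (X A) v - omegaD k n A (X₀ A) v :=
          fun A => omegaD_sub' k n A _ _ v
        rw [Finset.sum_congr rfl fun A _ => this A, Finset.sum_sub_distrib,
          hω v, hω0 v, sub_self]
    · rintro ⟨hη, hω⟩
      refine ⟨fun A B => ?_, fun v => ?_⟩
      · have h := hη A B
        rw [show (X - X₀) B = X B - X₀ B from rfl, etaD_sub', hη0 A B] at h
        linarith [h]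
      · have h := hω v
        have h2 : ∀ A : Fin k, omegaD k n A ((X - X₀) A) v
            = omegaD k n A (X A) v - omegaD k n A (X₀ A) v :=
          fun A => omegaD_sub' k n A _ _ v
        rw [Finset.sum_congr rfl fun A _ => h2 A, Finset.sum_sub_distrib,
          hω0 v, sub_eq_zero] at h
        exact h
end Aux
end

section
/- Let M be a smooth manifold with closed 1-forms η¹,…,ηᵏ, closed 2-forms ω¹,…,ωᵏ, Reeb fields R_A satisfying i(R_A)ηᴮ = δᴬᴮ and i(R_A)ωᴮ = 0, and a smooth function H. Suppose Y is a vector field with L_Y ωᴬ = 0, L_Y ηᴬ = 0, Y(H) = 0, and [Y, R_A] = 0 for all A. Then for every k-tuple (X₁,…,X_k) of vector fields satisfying ηᴬ(X_B) = δᴬᴮ and Σ_A i(X_A)ωᴬ = dH − Σ_A (R_A H)ηᴬ, the bracketed k-tuple ([Y,X₁],…,[Y,X_k]) satisfies ηᴬ([Y,X_B]) = 0 for all A,B and Σ_A i([Y,X_A])ωᴬ = 0. -/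
section BracketHelpers
variable {E : Type*} [NormedAddCommGroup E] [NormedSpace ℝ E]
variable {F : Type*} [NormedAddCommGroup F] [NormedSpace ℝ F]

lemma evc (f : E → E →L[ℝ] F) (hf : Differentiable ℝ f) (v x w : E) :
    fderiv ℝ (fun y => f y v) x w = fderiv ℝ f x w v := by
  rw [fderiv_clm_apply (hf x) (differentiableAt_const v)]
  simp

lemma eva (f : E → E →L[ℝ] F) (g : E → E) (hf : Differentiable ℝ f)
    (hg : Differentiable ℝ g) (x w : E) :
    fderiv ℝ (fun y => f y (g y)) x w
      = fderiv ℝ f x w (g x) + f x (fderiv ℝ g x w) := by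
  rw [fderiv_clm_apply (hf x) (hg x)]
  simp [add_comm]

lemma evc2 (f : E → E →L[ℝ] E →L[ℝ] ℝ) (hf : Differentiable ℝ f) (u v x w : E) :
    fderiv ℝ (fun y => f y u v) x w = fderiv ℝ f x w u v := by
  have h1 : Differentiable ℝ (fun y => f y u) :=
    hf.clm_apply (differentiable_const u)
  have := evc (fun y => f y u) h1 v x w
  rw [this, evc f hf u x w]

lemma eva2 (f : E → E →L[ℝ] E →L[ℝ] ℝ) (g : E → E) (hf : Differentiable ℝ f)
    (hg : Differentiable ℝ g) (v x w : E) :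
    fderiv ℝ (fun y => f y (g y) v) x w
      = fderiv ℝ f x w (g x) v + f x (fderiv ℝ g x w) v := by
  have h1 : Differentiable ℝ (fun y => f y (g y)) := hf.clm_apply hg
  have := evc (fun y => f y (g y)) h1 v x w
  rw [this, eva f g hf hg x w]
  simp

lemma symH (H : E → ℝ) (hH : ContDiff ℝ (⊤ : ℕ∞) H) (x u v : E) :
    fderiv ℝ (fderiv ℝ H) x u v = fderiv ℝ (fderiv ℝ H) x v u := by
  have h1 : ∀ y, HasFDerivAt H (fderiv ℝ H y) y := fun y =>
    (hH.differentiable (by simp) y).hasFDerivAt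
  have h2 : HasFDerivAt (fderiv ℝ H) (fderiv ℝ (fderiv ℝ H) x) x :=
    (((hH.fderiv_right (m := (⊤ : ℕ∞)) ((by simp))).differentiable (by simp)) x).hasFDerivAt
  exact second_derivative_symmetric h1 h2 u v

end BracketHelpers

/-- For an infinitesimal k-cosymplectic Noether symmetry Y and any k-vector field X
solving the geometric Hamilton equations, the bracket [Y,X] lies in ker ω# ∩ ker η#. -/
theorem bracket_in_kernel (k : ℕ) {E : Type*}
    [NormedAddCommGroup E] [NormedSpace ℝ E]
    (ω : Fin k → E → E →L[ℝ] E →L[ℝ] ℝ) (η : Fin k → E → E →L[ℝ] ℝ)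
    (hωs : ∀ A, ContDiff ℝ (⊤ : ℕ∞) (ω A)) (hηs : ∀ A, ContDiff ℝ (⊤ : ℕ∞) (η A))
    (halt : ∀ A x (u v : E), ω A x u v = - ω A x v u)
    (hωclosed : ∀ A x (u v w : E),
      fderiv ℝ (fun y => ω A y v w) x u - fderiv ℝ (fun y => ω A y u w) x v
        + fderiv ℝ (fun y => ω A y u v) x w = 0)
    (hηclosed : ∀ A x (u v : E),
      fderiv ℝ (fun y => η A y v) x u - fderiv ℝ (fun y => η A y u) x v = 0)
    (R : Fin k → E → E) (hRs : ∀ A, ContDiff ℝ (⊤ : ℕ∞) (R A))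
    (hRη : ∀ A B x, η B x (R A x) = if A = B then (1 : ℝ) else 0)
    (hRω : ∀ A B x (u : E), ω B x (R A x) u = 0)
    (H : E → ℝ) (hH : ContDiff ℝ (⊤ : ℕ∞) H)
    (Y : E → E) (hY : ContDiff ℝ (⊤ : ℕ∞) Y)
    (hLω : ∀ A x (u v : E), lieDeriv2 Y (ω A) x u v = 0)
    (hLη : ∀ A x (v : E), lieDeriv1 Y (η A) x v = 0)
    (hYH : ∀ x, fderiv ℝ H x (Y x) = 0)
    (hYR : ∀ A x, vbracket Y (R A) x = 0)
    (X : Fin k → E → E) (hXs : ∀ A, ContDiff ℝ (⊤ : ℕ∞) (X A))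
    (hXη : ∀ A B x, η A x (X B x) = if A = B then (1 : ℝ) else 0)
    (hXω : ∀ x (v : E), ∑ A, ω A x (X A x) v
      = fderiv ℝ H x v - ∑ A, (fderiv ℝ H x (R A x)) * η A x v) :
    (∀ A B x, η A x (vbracket Y (X B) x) = 0) ∧
    (∀ x (v : E), ∑ A, ω A x (vbracket Y (X A) x) v = 0) := by
  have hω' : ∀ A, Differentiable ℝ (ω A) := fun A => (hωs A).differentiable (by simp)
  have hη' : ∀ A, Differentiable ℝ (η A) := fun A => (hηs A).differentiable (by simp)
  have hR' : ∀ A, Differentiable ℝ (R A) := fun A => (hRs A).differentiable (by simp)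
  have hX' : ∀ A, Differentiable ℝ (X A) := fun A => (hXs A).differentiable (by simp)
  have hY' : Differentiable ℝ Y := hY.differentiable (by simp)
  have hdH' : Differentiable ℝ (fderiv ℝ H) :=
    (hH.fderiv_right (m := (⊤ : ℕ∞)) (by simp)).differentiable (by simp)
  -- key: derivative of Y(H) = 0
  have hkey : ∀ x (u : E), fderiv ℝ (fderiv ℝ H) x u (Y x)
      = - fderiv ℝ H x (fderiv ℝ Y x u) := by
    intro x u
    have hz : (fun y => fderiv ℝ H y (Y y)) = fun _ => (0 : ℝ) := funext hYH
    have h := eva (fderiv ℝ H) Y hdH' hY' x u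
    rw [hz] at h
    simp only [fderiv_fun_const, Pi.zero_apply, ContinuousLinearMap.zero_apply] at h
    linarith
  constructor
  · intro A B x
    have hc : fderiv ℝ (fun y => η A y (X B y)) x = 0 := by
      have hfun : (fun y => η A y (X B y)) = fun _ => (if A = B then (1:ℝ) else 0) :=
        funext (hXη A B)
      rw [hfun, fderiv_fun_const]
      rfl
    have h1 := eva (η A) (X B) (hη' A) (hX' B) x (Y x)
    rw [hc] at h1
    simp only [ContinuousLinearMap.zero_apply] at h1
    have h2 := hLη A x (X B x)
    unfold lieDeriv1 at h2
    rw [evc (η A) (hη' A) (X B x) x (Y x)] at h2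
    unfold vbracket
    rw [map_sub]
    linarith
  · intro x v
    -- bracket identity per A
    have hbr : ∀ A, ω A x (vbracket Y (X A) x) v
        = fderiv ℝ (fun y => ω A y (X A y) v) x (Y x)
          + ω A x (X A x) (fderiv ℝ Y x v) := by
      intro A
      have hL := hLω A x (X A x) v
      unfold lieDeriv2 at hL
      rw [evc2 (ω A) (hω' A) (X A x) v x (Y x)] at hL
      have he := eva2 (ω A) (X A) (hω' A) (hX' A) v x (Y x)
      unfold vbracket
      rw [map_sub, ContinuousLinearMap.sub_apply]
      linarith
    rw [Finset.sum_congr rfl (fun A _ => hbr A), Finset.sum_add_distrib]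
    -- second sum via hXω
    have hsum2 : ∑ A, ω A x (X A x) (fderiv ℝ Y x v)
        = fderiv ℝ H x (fderiv ℝ Y x v)
          - ∑ A, fderiv ℝ H x (R A x) * η A x (fderiv ℝ Y x v) :=
      hXω x (fderiv ℝ Y x v)
    -- first sum
    have hdiffA : ∀ A, Differentiable ℝ (fun y => ω A y (X A y) v) := fun A =>
      (((hω' A).clm_apply (hX' A)).clm_apply (differentiable_const v))
    have hsum1 : ∑ A, fderiv ℝ (fun y => ω A y (X A y) v) x (Y x)
        = fderiv ℝ (fun y => ∑ A, ω A y (X A y) v) x (Y x) := by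
      rw [fderiv_fun_sum (fun A _ => (hdiffA A) x)]
      simp
    rw [hsum1]
    have hfun : (fun y => ∑ A, ω A y (X A y) v)
        = fun y => fderiv ℝ H y v - ∑ A, fderiv ℝ H y (R A y) * η A y v :=
      funext (fun y => hXω y v)
    rw [hfun]
    -- differentiabilities
    have hcA : ∀ A, Differentiable ℝ (fun y => fderiv ℝ H y (R A y)) := fun A =>
      hdH'.clm_apply (hR' A)
    have heA : ∀ A, Differentiable ℝ (fun y => η A y v) := fun A =>
      (hη' A).clm_apply (differentiable_const v)
    have hprodA : ∀ A, Differentiable ℝ (fun y => fderiv ℝ H y (R A y) * η A y v) :=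
      fun A => (hcA A).mul (heA A)
    have hd1 : Differentiable ℝ (fun y => fderiv ℝ H y v) :=
      hdH'.clm_apply (differentiable_const v)
    have hdsum : DifferentiableAt ℝ (fun y => ∑ A, fderiv ℝ H y (R A y) * η A y v) x := by
      apply DifferentiableAt.fun_sum
      exact fun A _ => (hprodA A) x
    rw [fderiv_fun_sub (hd1 x) hdsum]
    simp only [ContinuousLinearMap.coe_sub', Pi.sub_apply]
    rw [fderiv_fun_sum (fun A _ => (hprodA A) x)]
    simp only [ContinuousLinearMap.coe_sum', Finset.sum_apply]
    -- term 1
    have ht1 : fderiv ℝ (fun y => fderiv ℝ H y v) x (Y x)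
        = - fderiv ℝ H x (fderiv ℝ Y x v) := by
      rw [evc (fderiv ℝ H) hdH' v x (Y x), symH H hH x (Y x) v, hkey x v]
    -- product terms
    have ht2 : ∀ A, fderiv ℝ (fun y => fderiv ℝ H y (R A y) * η A y v) x (Y x)
        = - (fderiv ℝ H x (R A x) * η A x (fderiv ℝ Y x v)) := by
      intro A
      rw [fderiv_fun_mul ((hcA A) x) ((heA A) x)]
      simp only [ContinuousLinearMap.add_apply, ContinuousLinearMap.coe_smul',
        Pi.smul_apply, smul_eq_mul]
      have hca : fderiv ℝ (fun y => fderiv ℝ H y (R A y)) x (Y x) = 0 := by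
        rw [eva (fderiv ℝ H) (R A) hdH' (hR' A) x (Y x), symH H hH x (Y x) (R A x),
          hkey x (R A x)]
        have hb := hYR A x
        unfold vbracket at hb
        have : fderiv ℝ (R A) x (Y x) = fderiv ℝ Y x (R A x) := by
          have := sub_eq_zero.mp hb
          exact this
        rw [this]
        ring
      have hea : fderiv ℝ (fun y => η A y v) x (Y x) = - η A x (fderiv ℝ Y x v) := by
        have h2 := hLη A x v
        unfold lieDeriv1 at h2
        linarith
      rw [hca, hea]
      ring
    rw [ht1, Finset.sum_congr rfl (fun A _ => ht2 A), hsum2]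
    simp
end
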